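/- Let H be a nonnegative random variable with continuous strictly increasing CDF F, and suppose λ > 0, S > 0, A ≥ 1 satisfy λ·A·S < 1 and the average power constraint S = E[ min( max(1/λ − 1/H, 0), A·S ) ]. Then 1 − F( λ/(1 − λ·A·S) ) ≤ 1/A ≤ 1 − F(λ). -/

import Mathlib

open MeasureTheory Real Set Filter

/-!
The allocation `p(H) = min (max (1/λ - 1/H) 0) (A S)` is sandwiched between two indicators of
height `A S`: it vanishes when `0 < H ≤ λ`, and it equals the peak `A S` once
`H > λ / (1 - λ A S)`, i.e. once `1/λ - 1/H > A S`. Taking expectations in the constraint gives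
`A S · ℙ(H > λ / (1 - λ A S)) ≤ S ≤ A S · ℙ(H > λ)`, and dividing by `A S` gives both bounds.
The event `H = 0`, where `1 / H` is the junk value `0`, is null because the CDF is continuous
and vanishes on the negative half-line.
-/

section Distribution

variable {Ω : Type*} [MeasurableSpace Ω] {μ : Measure Ω} {H : Ω → ℝ}

lemma ae_lt_of_le_of_continuousAt_cdf [IsFiniteMeasure μ] {a : ℝ} (hH : ∀ ω, a ≤ H ω)
    (hF : ContinuousAt (fun x => μ.real {ω | H ω ≤ x}) a) : ∀ᵐ ω ∂μ, a < H ω := by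
  have hvanish : MapsTo (fun x => μ.real {ω | H ω ≤ x}) (Iio a) {0} := fun x hx => by
    have hempty : {ω | H ω ≤ x} = ∅ :=
      eq_empty_of_forall_notMem fun ω hω => (hx.trans_le (hH ω)).not_ge hω
    simp [hempty]
  have hatom : μ.real {ω | H ω ≤ a} = 0 := by
    simpa using hF.continuousWithinAt.mem_closure (by simp) hvanish
  rw [ae_iff]
  simpa [not_lt] using (measureReal_eq_zero_iff).mp hatom

lemma probReal_lt_eq_one_sub [IsProbabilityMeasure μ] (hH : Measurable H) (x : ℝ) :
    μ.real {ω | x < H ω} = 1 - μ.real {ω | H ω ≤ x} := by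
  rw [← probReal_compl_eq_one_sub (measurableSet_le hH measurable_const)]
  congr 1
  ext ω
  simp

end Distribution

section ClippedWaterFilling

noncomputable def clippedWaterFilling (lam P h : ℝ) : ℝ := min (max (1 / lam - 1 / h) 0) P

variable {lam P h : ℝ}

lemma clippedWaterFilling_le : clippedWaterFilling lam P h ≤ P := min_le_right _ _

lemma clippedWaterFilling_nonneg (hP : 0 ≤ P) : 0 ≤ clippedWaterFilling lam P h :=
  le_min (le_max_right _ _) hP

lemma measurable_clippedWaterFilling : Measurable (clippedWaterFilling lam P) :=
  ((measurable_const.sub (measurable_const.div measurable_id)).max measurable_const).min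
    measurable_const

lemma clippedWaterFilling_eq_zero (hP : 0 ≤ P) (h0 : 0 < h) (hh : h ≤ lam) :
    clippedWaterFilling lam P h = 0 := by
  have : 1 / lam ≤ 1 / h := one_div_le_one_div_of_le h0 hh
  rw [clippedWaterFilling, max_eq_right (sub_nonpos.mpr this), min_eq_left hP]

lemma clippedWaterFilling_eq_peak (hlam : 0 < lam) (hP : lam * P < 1)
    (hh : lam / (1 - lam * P) < h) :
    clippedWaterFilling lam P h = P := by
  have hinv : 1 / h < 1 / lam - P := by
    calc 1 / h < 1 / (lam / (1 - lam * P)) := one_div_lt_one_div_of_lt (by positivity) hh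
      _ = 1 / lam - P := by field_simp
  exact min_eq_right (le_max_of_le_left (by linarith))

variable {Ω : Type*} [MeasurableSpace Ω] {μ : Measure Ω} [IsProbabilityMeasure μ] {H : Ω → ℝ}

lemma integrable_clippedWaterFilling (hH : Measurable H) (hP : 0 ≤ P) :
    Integrable (fun ω => clippedWaterFilling lam P (H ω)) μ :=
  Integrable.of_bound (measurable_clippedWaterFilling.comp hH).aestronglyMeasurable P
    (ae_of_all _ fun _ => by
      rw [Real.norm_of_nonneg (clippedWaterFilling_nonneg hP)]; exact clippedWaterFilling_le)

lemma integral_clippedWaterFilling_le (hH : Measurable H) (hpos : ∀ᵐ ω ∂μ, 0 < H ω)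
    (hP : 0 ≤ P) :
    ∫ ω, clippedWaterFilling lam P (H ω) ∂μ ≤ P * μ.real {ω | lam < H ω} := by
  have hs : MeasurableSet {ω | lam < H ω} := hH measurableSet_Ioi
  have hle : (fun ω => clippedWaterFilling lam P (H ω))
      ≤ᵐ[μ] {ω | lam < H ω}.indicator fun _ => P := by
    filter_upwards [hpos] with ω hω
    by_cases hω' : lam < H ω
    · simpa [hω'] using clippedWaterFilling_le
    · simp [hω', clippedWaterFilling_eq_zero hP hω (not_lt.mp hω')]
  calc ∫ ω, clippedWaterFilling lam P (H ω) ∂μ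
      ≤ ∫ ω, {ω | lam < H ω}.indicator (fun _ => P) ω ∂μ :=
        integral_mono_ae (integrable_clippedWaterFilling hH hP)
          ((integrable_const P).indicator hs) hle
    _ = P * μ.real {ω | lam < H ω} := by rw [integral_indicator_const _ hs, smul_eq_mul, mul_comm]

lemma mul_probReal_le_integral_clippedWaterFilling (hH : Measurable H) (hlam : 0 < lam)
    (hP : 0 ≤ P) (hpeak : lam * P < 1) :
    P * μ.real {ω | lam / (1 - lam * P) < H ω} ≤ ∫ ω, clippedWaterFilling lam P (H ω) ∂μ := by
  set c := lam / (1 - lam * P)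
  have hs : MeasurableSet {ω | c < H ω} := hH measurableSet_Ioi
  have hle : ({ω | c < H ω}.indicator fun _ => P)
      ≤ fun ω => clippedWaterFilling lam P (H ω) := by
    intro ω
    by_cases hω : c < H ω
    · simp [hω, clippedWaterFilling_eq_peak hlam hpeak hω]
    · simp [hω, clippedWaterFilling_nonneg hP]
  calc P * μ.real {ω | c < H ω}
      = ∫ ω, {ω | c < H ω}.indicator (fun _ => P) ω ∂μ := by
        rw [integral_indicator_const _ hs, smul_eq_mul, mul_comm]
    _ ≤ ∫ ω, clippedWaterFilling lam P (H ω) ∂μ :=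
        integral_mono ((integrable_const P).indicator hs)
          (integrable_clippedWaterFilling hH hP) hle

end ClippedWaterFilling

theorem stmt3_general {Ω : Type*} [MeasureSpace Ω] [IsProbabilityMeasure (volume : Measure Ω)]
    (H : Ω → ℝ) (hHmeas : Measurable H) (hHnn : ∀ ω, 0 ≤ H ω)
    (F : ℝ → ℝ) (hF : ∀ x, F x = (volume {ω | H ω ≤ x}).toReal)
    (hFc : Continuous F)
    (lam S A : ℝ) (hlam : 0 < lam) (hS : 0 < S) (hA : 1 ≤ A)
    (hpeak : lam * A * S < 1)
    (hconstraint : S = ∫ ω, min (max (1 / lam - 1 / H ω) 0) (A * S)) :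
    1 - F (lam / (1 - lam * A * S)) ≤ 1 / A ∧ 1 / A ≤ 1 - F lam := by
  have hA0 : 0 < A := by linarith
  have hAS : 0 ≤ A * S := by positivity
  have hpeak' : lam * (A * S) < 1 := by linarith
  have hcdf : F = fun x => volume.real {ω | H ω ≤ x} := funext hF
  have htail (x : ℝ) : volume.real {ω | x < H ω} = 1 - F x := by
    rw [hF x]; exact probReal_lt_eq_one_sub hHmeas x
  have hpos : ∀ᵐ ω, 0 < H ω :=
    ae_lt_of_le_of_continuousAt_cdf hHnn (hcdf ▸ hFc.continuousAt)
  have hupper := integral_clippedWaterFilling_le (lam := lam) hHmeas hpos hAS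
  have hlower :=
    mul_probReal_le_integral_clippedWaterFilling (μ := volume) hHmeas hlam hAS hpeak'
  have hmean : ∫ ω, clippedWaterFilling lam (A * S) (H ω) = S := hconstraint.symm
  rw [hmean, htail] at hupper
  rw [hmean, ← mul_assoc, htail] at hlower
  constructor
  · rw [le_div_iff₀ hA0]; nlinarith
  · rw [div_le_iff₀ hA0]; nlinarith

theorem stmt3 {Ω : Type*} [MeasureSpace Ω] [IsProbabilityMeasure (volume : Measure Ω)]
    (H : Ω → ℝ) (hHmeas : Measurable H) (hHnn : ∀ ω, 0 ≤ H ω)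
    (F : ℝ → ℝ) (hF : ∀ x, F x = (volume {ω | H ω ≤ x}).toReal)
    (hFc : Continuous F) (hFsm : StrictMonoOn F (Set.Ici 0))
    (lam S A : ℝ) (hlam : 0 < lam) (hS : 0 < S) (hA : 1 ≤ A)
    (hpeak : lam * A * S < 1)
    (hconstraint : S = ∫ ω, min (max (1 / lam - 1 / H ω) 0) (A * S)) :
    1 - F (lam / (1 - lam * A * S)) ≤ 1 / A ∧ 1 / A ≤ 1 - F lam :=
  stmt3_general H hHmeas hHnn F hF hFc lam S A hlam hS hA hpeak hconstraint
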